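/- For a β-admissible word (ε_1,…,ε_n) and integer p ≥ 0, the basic interval I_{n+p}(ε_1,…,ε_n,0^p) (the word followed by p zeros) is full if and only if |I_n(ε_1,…,ε_n)| ≥ β^{−(n+p)}. -/

import Mathlib

open Filter MeasureTheory Set

/-- The β-transformation T_β(x) = βx − ⌊βx⌋. -/
noncomputable def betaT (β : ℝ) : ℝ → ℝ := fun x => β * x - ⌊β * x⌋

/-- The (i+1)-th digit of the β-expansion of x (0-indexed). -/
noncomputable def betaDigit (β x : ℝ) (i : ℕ) : ℤ := ⌊β * (betaT β)^[i] x⌋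

/-- A finite word is β-admissible if some x ∈ [0,1) has β-expansion beginning with it. -/
def IsAdmissibleWord (β : ℝ) (w : List ℤ) : Prop :=
  ∃ x ∈ Set.Ico (0:ℝ) 1, ∀ i (h : i < w.length), w.get ⟨i, h⟩ = betaDigit β x i

/-- An infinite sequence is β-admissible if it is the digit sequence of some x ∈ [0,1). -/
def IsAdmissibleSeq (β : ℝ) (e : ℕ → ℤ) : Prop :=
  ∃ x ∈ Set.Ico (0:ℝ) 1, ∀ i, e i = betaDigit β x i

/-- The basic interval (cylinder) of a word. -/
def cylinder (β : ℝ) (w : List ℤ) : Set ℝ :=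
  {x | x ∈ Set.Ico (0:ℝ) 1 ∧ ∀ i (h : i < w.length), betaDigit β x i = w.get ⟨i, h⟩}

/-- A basic interval is full if its length is β^{-n}. -/
def IsFull (β : ℝ) (w : List ℤ) : Prop :=
  volume (cylinder β w) = ENNReal.ofReal (1 / β ^ w.length)

-- The infinite β-expansion of 1: the periodic modification if the expansion of 1
-- terminates, and the expansion of 1 itself otherwise (0-indexed).
open Classical in
noncomputable def betaStar (β : ℝ) : ℕ → ℤ :=
  if h : ∃ n, betaDigit β 1 n ≠ 0 ∧ ∀ i, n < i → betaDigit β 1 i = 0 then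
    fun i =>
      if i % (h.choose + 1) = h.choose then betaDigit β 1 h.choose - 1
      else betaDigit β 1 (i % (h.choose + 1))
  else betaDigit β 1

/-- Strict lexicographic order on integer sequences. -/
def lexLt (a b : ℕ → ℤ) : Prop := ∃ n, (∀ i, i < n → a i = b i) ∧ a n < b n

/-- l_n(β): the length of the longest run of zeros following the n-th digit
(1-indexed position n) in the infinite β-expansion of 1. -/
noncomputable def zeroRunLen (β : ℝ) (n : ℕ) : ℕ∞ :=
  ⨆ k ∈ {k : ℕ | ∀ j, j < k → betaStar β (n + j) = 0}, (k : ℕ∞)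

/-- A₀: the set of bases β > 1 with bounded zero-runs in the expansion of 1. -/
def A0 : Set ℝ := {β | 1 < β ∧ ∃ C : ℕ, ∀ n, 1 ≤ n → zeroRunLen β n ≤ (C : ℕ∞)}

/-- The waiting time W_n^β(x,y): first k ≥ 1 with T_β^k x in the n-th basic interval of y. -/
noncomputable def waitingTime (β x y : ℝ) (n : ℕ) : ℕ∞ :=
  sInf {k : ℕ∞ | ∃ m : ℕ, k = (m : ℕ∞) ∧ 1 ≤ m ∧
    ∀ i, i < n → betaDigit β ((betaT β)^[m] x) i = betaDigit β y i}

/-- (log W_n^β(x,y)) / n as an extended real, with value ⊤ when W_n = ∞. -/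
noncomputable def waitingRatio (β x y : ℝ) (n : ℕ) : EReal :=
  if h : waitingTime β x y n = ⊤ then ⊤
  else (((Real.log ((waitingTime β x y n).untop h : ℕ)) / n : ℝ) : EReal)

noncomputable def wval (β : ℝ) : List ℤ → ℝ
  | [] => 0
  | d :: w => ((d : ℝ) + wval β w) / β

lemma betaT_mem (β x : ℝ) : betaT β x ∈ Set.Ico (0:ℝ) 1 := by
  have : betaT β x = Int.fract (β * x) := rfl
  rw [this]
  exact ⟨Int.fract_nonneg _, Int.fract_lt_one _⟩

lemma iter_mem (β x : ℝ) (hx : x ∈ Set.Ico (0:ℝ) 1) (n : ℕ) :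
    (betaT β)^[n] x ∈ Set.Ico (0:ℝ) 1 := by
  induction n with
  | zero => simpa using hx
  | succ n _ => rw [Function.iterate_succ_apply']; exact betaT_mem β _

lemma digit_succ (β x : ℝ) (i : ℕ) : betaDigit β x (i+1) = betaDigit β (betaT β x) i := by
  simp [betaDigit, Function.iterate_succ_apply]

lemma expand (β : ℝ) (hβ0 : β ≠ 0) (w : List ℤ) :
    ∀ x : ℝ, (∀ i (h : i < w.length), betaDigit β x i = w.get ⟨i, h⟩) →
    x = wval β w + (betaT β)^[w.length] x / β ^ w.length := by
  induction w with
  | nil => intro x _; simp [wval]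
  | cons d w ih =>
    intro x hx
    have h0 : ⌊β * x⌋ = d := by simpa [betaDigit] using hx 0 (by simp)
    have hT : ∀ i (h : i < w.length), betaDigit β (betaT β x) i = w.get ⟨i, h⟩ := by
      intro i h
      have := hx (i+1) (by simpa using Nat.succ_lt_succ h)
      rw [digit_succ] at this
      simpa using this
    have hrec := ih (betaT β x) hT
    have hTx : betaT β x = β * x - d := by rw [betaT]; simp [h0]
    have hit : (betaT β)^[w.length] (betaT β x) = (betaT β)^[w.length+1] x :=
      (Function.iterate_succ_apply (betaT β) w.length x).symm
    rw [hit] at hrec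
    have hkey : β * x - d = wval β w + (betaT β)^[w.length+1] x / β ^ w.length := by
      rw [← hTx]; exact hrec
    show x = ((d:ℝ) + wval β w) / β + (betaT β)^[w.length+1] x / β ^ (w.length+1)
    rw [pow_succ]
    linear_combination hkey / β - x * mul_inv_cancel₀ hβ0

lemma keyC (β : ℝ) (hβ : 1 < β) (w : List ℤ) :
    ∀ x ∈ Set.Ico (0:ℝ) 1, (∀ i (h : i < w.length), betaDigit β x i = w.get ⟨i, h⟩) →
    ∀ t : ℝ, 0 ≤ t → t ≤ (betaT β)^[w.length] x →
    (wval β w + t / β ^ w.length) ∈ Set.Ico (0:ℝ) 1 ∧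
    (∀ i (h : i < w.length), betaDigit β (wval β w + t / β ^ w.length) i = w.get ⟨i, h⟩) ∧
    (betaT β)^[w.length] (wval β w + t / β ^ w.length) = t := by
  have hβ0 : (β:ℝ) ≠ 0 := by positivity
  induction w with
  | nil =>
    intro x hx _ t ht0 ht1
    simp only [List.length_nil, pow_zero, Function.iterate_zero, id] at *
    refine ⟨⟨by simpa [wval] using ht0, ?_⟩, by simp, by simp [wval]⟩
    simp only [wval, zero_add, div_one]
    exact lt_of_le_of_lt ht1 hx.2
  | cons d w ih =>
    intro x hx hdig t ht0 ht1
    have h0 : ⌊β * x⌋ = d := by simpa [betaDigit] using hdig 0 (by simp)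
    have hd0 : (0:ℤ) ≤ d := by
      rw [← h0]; exact Int.floor_nonneg.mpr (mul_nonneg (by positivity) hx.1)
    have hdR : (0:ℝ) ≤ (d:ℝ) := by exact_mod_cast hd0
    have hTx : betaT β x = β * x - d := by rw [betaT]; simp [h0]
    have hx' : betaT β x ∈ Set.Ico (0:ℝ) 1 := betaT_mem β x
    have hdig' : ∀ i (h : i < w.length), betaDigit β (betaT β x) i = w.get ⟨i, h⟩ := by
      intro i h
      have := hdig (i+1) (by simpa using Nat.succ_lt_succ h)
      rw [digit_succ] at this
      simpa using this
    have hit : (betaT β)^[w.length] (betaT β x) = (betaT β)^[w.length+1] x :=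
      (Function.iterate_succ_apply (betaT β) w.length x).symm
    have ht1' : t ≤ (betaT β)^[w.length] (betaT β x) := by rw [hit]; exact ht1
    obtain ⟨hy'mem, hy'dig, hy'it⟩ := ih (betaT β x) hx' hdig' t ht0 ht1'
    set y' : ℝ := wval β w + t / β ^ w.length with hy'
    set y : ℝ := wval β (d :: w) + t / β ^ (d :: w).length with hy
    have hyval : y = ((d:ℝ) + y') / β := by
      rw [hy, hy']
      show wval β (d :: w) + t / β ^ (w.length + 1) = _
      show ((d:ℝ) + wval β w) / β + t / β ^ (w.length + 1) = _
      rw [pow_succ]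
      field_simp
      ring
    have hby : β * y = (d:ℝ) + y' := by rw [hyval]; field_simp
    have hfl : ⌊β * y⌋ = d := by
      rw [hby]
      rw [Int.floor_intCast_add]
      have : ⌊y'⌋ = 0 := Int.floor_eq_zero_iff.mpr ⟨hy'mem.1, hy'mem.2⟩
      omega
    have hTy : betaT β y = y' := by rw [betaT, hfl, hby]; ring
    have hymem : y ∈ Set.Ico (0:ℝ) 1 := by
      constructor
      · rw [hyval]
        exact div_nonneg (add_nonneg hdR hy'mem.1) (by positivity)
      · have hex := expand β hβ0 (d :: w) x hdig
        have hle : y ≤ x := by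
          rw [hy, hex]
          have : t / β ^ (d :: w).length ≤ (betaT β)^[(d :: w).length] x / β ^ (d :: w).length := by
            gcongr
          linarith
        exact lt_of_le_of_lt hle hx.2
    refine ⟨hymem, ?_, ?_⟩
    · intro i h
      match i with
      | 0 => simpa [betaDigit] using hfl
      | (i+1) =>
        rw [digit_succ, hTy]
        have h' : i < w.length := by simpa using Nat.succ_lt_succ_iff.mp (by simpa using h)
        simpa using hy'dig i h'
    · show (betaT β)^[w.length + 1] y = t
      rw [Function.iterate_succ_apply, hTy, hy'it]

noncomputable def tailSup (β : ℝ) (w : List ℤ) : ℝ :=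
  sSup ((fun x => (betaT β)^[w.length] x) '' cylinder β w)

lemma Dq_volume (β : ℝ) (hβ : 1 < β) (w : List ℤ) (hw : IsAdmissibleWord β w)
    (q : ℝ) (hq0 : 0 < q) :
    volume {x | x ∈ cylinder β w ∧ (betaT β)^[w.length] x < q}
      = ENNReal.ofReal (min (tailSup β w) q / β ^ w.length) := by
  have hβ0 : (β:ℝ) ≠ 0 := by positivity
  set n := w.length
  set a := wval β w with ha
  set S := (fun x => (betaT β)^[n] x) '' cylinder β w with hSdef
  set s := tailSup β w with hs
  have hss : s = sSup S := rfl
  obtain ⟨x₀, hx₀, hdig₀⟩ := hw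
  have hx₀c : x₀ ∈ cylinder β w := ⟨hx₀, fun i h => (hdig₀ i h).symm⟩
  have hS1 : S.Nonempty := ⟨_, Set.mem_image_of_mem _ hx₀c⟩
  have hSsub : S ⊆ Set.Ico 0 1 := by
    rintro u ⟨x, hx, rfl⟩
    exact iter_mem β x hx.1 n
  have hSb : BddAbove S := BddAbove.mono hSsub (bddAbove_Ico)
  have hs0 : 0 ≤ s := le_csSup hSb hS1.choose_spec |>.trans' (hSsub hS1.choose_spec).1
  set m := min s q with hm
  have hm0 : 0 ≤ m := le_min hs0 hq0.le
  have incl1 : Set.Ico a (a + m / β ^ n) ⊆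
      {x | x ∈ cylinder β w ∧ (betaT β)^[n] x < q} := by
    rintro z ⟨hz1, hz2⟩
    set t := (z - a) * β ^ n with htdef
    have ht0 : 0 ≤ t := mul_nonneg (by linarith) (by positivity)
    have htm : t < m := by
      rw [htdef]
      have : z - a < m / β ^ n := by linarith
      calc (z - a) * β ^ n < m / β ^ n * β ^ n :=
            mul_lt_mul_of_pos_right this (by positivity)
        _ = m := by field_simp
    have hts : t < s := lt_of_lt_of_le htm (min_le_left _ _)
    obtain ⟨u, huS, htu⟩ := exists_lt_of_lt_csSup hS1 (hss ▸ hts)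
    obtain ⟨x₁, hx₁c, rfl⟩ := huS
    obtain ⟨hmem, hdg, hitr⟩ := keyC β hβ w x₁ hx₁c.1 hx₁c.2 t ht0 htu.le
    have hz : a + t / β ^ n = z := by rw [htdef]; field_simp; ring
    rw [hz] at hmem hdg hitr
    exact ⟨⟨hmem, hdg⟩, by rw [hitr]; exact lt_of_lt_of_le htm (min_le_right _ _)⟩
  have incl2 : {x | x ∈ cylinder β w ∧ (betaT β)^[n] x < q} ⊆
      Set.Icc a (a + m / β ^ n) := by
    rintro x ⟨hxc, hxq⟩
    have hex := expand β hβ0 w x hxc.2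
    have hT0 : 0 ≤ (betaT β)^[n] x := (iter_mem β x hxc.1 n).1
    have hTs : (betaT β)^[n] x ≤ s := le_csSup hSb (Set.mem_image_of_mem _ hxc)
    have hTm : (betaT β)^[n] x ≤ m := le_min hTs hxq.le
    constructor
    · rw [hex]; have : 0 ≤ (betaT β)^[n] x / β ^ n := by positivity
      linarith
    · rw [hex]
      have : (betaT β)^[n] x / β ^ n ≤ m / β ^ n := by gcongr
      linarith
  refine le_antisymm ?_ ?_
  · calc volume {x | x ∈ cylinder β w ∧ (betaT β)^[n] x < q}
        ≤ volume (Set.Icc a (a + m / β ^ n)) := measure_mono incl2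
      _ = ENNReal.ofReal (m / β ^ n) := by rw [Real.volume_Icc]; ring_nf
  · calc ENNReal.ofReal (m / β ^ n) = volume (Set.Ico a (a + m / β ^ n)) := by
          rw [Real.volume_Ico]; ring_nf
      _ ≤ _ := measure_mono incl1

lemma zeros_iff (β : ℝ) (hβ : 1 < β) (p : ℕ) :
    ∀ y ∈ Set.Ico (0:ℝ) 1, ((∀ j, j < p → betaDigit β y j = 0) ↔ y < (1 / β) ^ p) := by
  have hβ0 : (0:ℝ) < β := by positivity
  induction p with
  | zero => intro y hy; simpa using hy.2
  | succ p ih =>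
    intro y hy
    have hq1 : (1 / β : ℝ) ^ p ≤ 1 :=
      pow_le_one₀ (by positivity) (by rw [div_le_one hβ0]; linarith)
    constructor
    · intro h
      have h0 : ⌊β * y⌋ = 0 := by simpa [betaDigit] using h 0 (Nat.succ_pos p)
      have hby : β * y < 1 := (Int.floor_eq_zero_iff.mp h0).2
      have hTy : betaT β y = β * y := by rw [betaT, h0]; push_cast; ring
      have hT : ∀ j, j < p → betaDigit β (betaT β y) j = 0 := by
        intro j hj
        have := h (j+1) (Nat.succ_lt_succ hj)
        rwa [digit_succ] at this
      have hTmem : betaT β y ∈ Set.Ico (0:ℝ) 1 := betaT_mem β y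
      have := (ih (betaT β y) hTmem).mp hT
      rw [hTy] at this
      rw [pow_succ]
      calc y = (β * y) * (1/β) := by field_simp
        _ < (1/β)^p * (1/β) := by
            apply mul_lt_mul_of_pos_right this (by positivity)
    · intro h j hj
      have hby : β * y < (1/β) ^ p := by
        have := mul_lt_mul_of_pos_left h hβ0
        calc β * y < β * (1/β)^(p+1) := this
          _ = (1/β)^p := by rw [pow_succ]; field_simp
      have hby1 : β * y < 1 := lt_of_lt_of_le hby hq1
      have h0 : ⌊β * y⌋ = 0 := Int.floor_eq_zero_iff.mpr ⟨mul_nonneg hβ0.le hy.1, hby1⟩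
      have hTy : betaT β y = β * y := by rw [betaT, h0]; push_cast; ring
      match j with
      | 0 => simpa [betaDigit] using h0
      | (j+1) =>
        rw [digit_succ]
        exact (ih (betaT β y) (betaT_mem β y)).mpr (by rw [hTy]; exact hby) j
          (Nat.succ_lt_succ_iff.mp hj)

lemma digit_iter_add (β x : ℝ) (n j : ℕ) :
    betaDigit β x (n + j) = betaDigit β ((betaT β)^[n] x) j := by
  simp [betaDigit, add_comm n j, Function.iterate_add_apply]

lemma cyl_append_zeros (β : ℝ) (hβ : 1 < β) (w : List ℤ) (p : ℕ) :
    _root_.cylinder β (w ++ List.replicate p 0)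
      = {x | x ∈ _root_.cylinder β w ∧ (betaT β)^[w.length] x < (1 / β) ^ p} := by
  ext x
  simp only [_root_.cylinder, Set.mem_setOf_eq]
  constructor
  · rintro ⟨hx, hdig⟩
    have hw' : ∀ i (h : i < w.length), betaDigit β x i = w.get ⟨i, h⟩ := by
      intro i h
      have h2 : i < (w ++ List.replicate p 0).length := by simp; omega
      have h3 : betaDigit β x i = (w ++ List.replicate p 0)[i] := hdig i h2
      rw [List.getElem_append_left h] at h3
      exact h3
    refine ⟨⟨hx, hw'⟩, ?_⟩
    rw [← zeros_iff β hβ p _ (iter_mem β x hx w.length)]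
    intro j hj
    rw [← digit_iter_add]
    have h2 : w.length + j < (w ++ List.replicate p 0).length := by simp; omega
    have h3 : betaDigit β x (w.length + j) = (w ++ List.replicate p 0)[w.length + j] :=
      hdig _ h2
    rw [List.getElem_append_right (by omega)] at h3
    simpa using h3
  · rintro ⟨⟨hx, hw'⟩, hlt⟩
    refine ⟨hx, ?_⟩
    intro i h
    show betaDigit β x i = (w ++ List.replicate p 0)[i]
    rcases Nat.lt_or_ge i w.length with hi | hi
    · rw [List.getElem_append_left hi]
      exact hw' i hi
    · obtain ⟨j, rfl⟩ := Nat.exists_eq_add_of_le hi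
      rw [List.getElem_append_right (by omega)]
      have hj : j < p := by simp at h; omega
      have h4 := (zeros_iff β hβ p _ (iter_mem β x hx w.length)).mpr hlt j hj
      rw [digit_iter_add]
      simpa using h4

lemma cyl_eq_D1 (β : ℝ) (w : List ℤ) :
    _root_.cylinder β w = {x | x ∈ _root_.cylinder β w ∧ (betaT β)^[w.length] x < 1} := by
  ext x
  simp only [Set.mem_setOf_eq]
  exact ⟨fun h => ⟨h, (iter_mem β x h.1 w.length).2⟩, fun h => h.1⟩

lemma tailSup_bounds (β : ℝ) (hβ : 1 < β) (w : List ℤ) (hw : IsAdmissibleWord β w) :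
    0 ≤ tailSup β w ∧ tailSup β w ≤ 1 := by
  obtain ⟨x₀, hx₀, hdig₀⟩ := hw
  have hx₀c : x₀ ∈ _root_.cylinder β w := ⟨hx₀, fun i h => (hdig₀ i h).symm⟩
  set S := (fun x => (betaT β)^[w.length] x) '' _root_.cylinder β w with hS
  have hS1 : S.Nonempty := ⟨_, Set.mem_image_of_mem _ hx₀c⟩
  have hSsub : S ⊆ Set.Ico 0 1 := by
    rintro u ⟨x, hx, rfl⟩; exact iter_mem β x hx.1 w.length
  have hSb : BddAbove S := BddAbove.mono hSsub bddAbove_Ico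
  constructor
  · exact le_csSup hSb hS1.choose_spec |>.trans' (hSsub hS1.choose_spec).1
  · exact csSup_le hS1 (fun u hu => (hSsub hu).2.le)


/-- I_{n+p}(ε₁,…,εₙ,0^p) is full iff |I_n(ε₁,…,εₙ)| ≥ β^{-(n+p)}. -/
theorem full_append_zeros_iff (β : ℝ) (hβ : 1 < β) (w : List ℤ)
    (hw : IsAdmissibleWord β w) (p : ℕ) :
    IsFull β (w ++ List.replicate p 0) ↔
      ENNReal.ofReal (1 / β ^ (w.length + p)) ≤ volume (cylinder β w) := by
  have hβ0 : (0:ℝ) < β := lt_trans one_pos hβ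
  have hq : (0:ℝ) < (1/β)^p := by positivity
  have hbn : (0:ℝ) < β ^ w.length := by positivity
  obtain ⟨hs0, hs1⟩ := tailSup_bounds β hβ w hw
  have h1 : volume (_root_.cylinder β w) = ENNReal.ofReal (tailSup β w / β ^ w.length) := by
    rw [cyl_eq_D1 β w, Dq_volume β hβ w hw 1 one_pos, min_eq_left hs1]
  have h2 : volume (_root_.cylinder β (w ++ List.replicate p 0))
      = ENNReal.ofReal (min (tailSup β w) ((1/β)^p) / β ^ w.length) := by
    rw [cyl_append_zeros β hβ w p, Dq_volume β hβ w hw ((1/β)^p) hq]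
  have hlen : (w ++ List.replicate p 0).length = w.length + p := by simp
  rw [IsFull, hlen, h2, h1]
  have hqn : 1 / β ^ (w.length + p) = (1/β)^p / β ^ w.length := by
    rw [pow_add, div_pow, one_pow]
    field_simp
  rw [hqn,
    ENNReal.ofReal_eq_ofReal_iff (div_nonneg (le_min hs0 hq.le) hbn.le) (div_nonneg hq.le hbn.le),
    ENNReal.ofReal_le_ofReal_iff (div_nonneg hs0 hbn.le)]
  constructor
  · intro h
    have hmin : min (tailSup β w) ((1/β)^p) = (1/β)^p := by
      rw [div_eq_div_iff hbn.ne' hbn.ne'] at h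
      exact mul_right_cancel₀ hbn.ne' h
    have hqs : (1/β)^p ≤ tailSup β w := min_eq_right_iff.mp hmin
    gcongr
  · intro h
    have hqs : (1/β)^p ≤ tailSup β w := by
      have := (div_le_div_iff_of_pos_right hbn).mp h
      linarith
    rw [min_eq_right hqs]
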